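/- Let F : GL(n,ℝ) × gl(n,ℝ) → ℝ be smooth and S-invariant, and define f(L) = F(1_n, L). Then for every L ∈ gl(n,ℝ), the matrix ∇₁F(1_n, L) is strictly upper triangular and equals (∇'f(L) − ∇f(L))_> − ((∇'f(L) − ∇f(L))_<)ᵀ. -/

import Mathlib

open Matrix

noncomputable section

attribute [local instance] Matrix.frobeniusNormedAddCommGroup Matrix.frobeniusNormedSpace

/-- `gl n` is the space of real `n × n` matrices. -/
abbrev gl (n : ℕ) := Matrix (Fin n) (Fin n) ℝ

variable {n : ℕ}

/-- The strictly upper triangular part `X_>`. -/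
def upPart (X : gl n) : gl n := Matrix.of fun i j => if i < j then X i j else 0

/-- The diagonal part `X_0`. -/
def diagPart (X : gl n) : gl n := Matrix.of fun i j => if i = j then X i j else 0

/-- The strictly lower triangular part `X_<`. -/
def lowPart (X : gl n) : gl n := Matrix.of fun i j => if j < i then X i j else 0

/-- The trace form `⟨X,Y⟩ = tr(XY)`. -/
def trForm (X Y : gl n) : ℝ := (X * Y).trace

/-- `R(X) = ½(X_> + X_0 − X_<) + (X_<)ᵀ`. -/
def Rop (X : gl n) : gl n := (1/2 : ℝ) • (upPart X + diagPart X - lowPart X) + (lowPart X)ᵀ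

/-- `R_a(X) = ½(X_> − X_<)`, the anti-symmetric part of `R`. -/
def Ra (X : gl n) : gl n := (1/2 : ℝ) • (upPart X - lowPart X)

/-- `R_s(X) = ½X_0 + (X_<)ᵀ`, the symmetric part of `R`. -/
def Rs (X : gl n) : gl n := (1/2 : ℝ) • diagPart X + (lowPart X)ᵀ

/-- `r₊ = R_a + ½·id`. -/
def rPlus (X : gl n) : gl n := Ra X + (1/2 : ℝ) • X

/-- `r₋ = R_a − ½·id`. -/
def rMinus (X : gl n) : gl n := Ra X - (1/2 : ℝ) • X

/-- The skew-symmetric part `Z⁺ = ½(Z − Zᵀ)`. -/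
def skewPart (X : gl n) : gl n := (1/2 : ℝ) • (X - Xᵀ)

/-- The symmetric part `Z⁻ = ½(Z + Zᵀ)`. -/
def symPart (X : gl n) : gl n := (1/2 : ℝ) • (X + Xᵀ)

/-- `df` is the gradient of `f` with respect to the trace form:
`tr(df(L)·Y)` is the derivative of `f` at `L` in direction `Y`. -/
def IsGradient (f : gl n → ℝ) (df : gl n → gl n) : Prop :=
  ∀ L Y : gl n, HasDerivAt (fun t : ℝ => f (L + t • Y)) (trForm (df L) Y) 0

/-- `f : gl(n,ℝ) → ℝ` is smooth. -/
def SmoothG (f : gl n → ℝ) : Prop := ContDiff ℝ (⊤ : ℕ∞) f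

/-- The quadratic r-matrix bracket `{f,h}₂(L)`, expressed via the gradient
functions `df`, `dh` of `f` and `h`:
`⟨∇f, R_a∇h⟩ − ⟨∇'f, R_a∇'h⟩ + ⟨∇f, R_s∇'h⟩ − ⟨∇'f, R_s∇h⟩`
with `∇f = L·df(L)` and `∇'f = df(L)·L`. -/
def quadBr (df dh : gl n → gl n) (L : gl n) : ℝ :=
  trForm (L * df L) (Ra (L * dh L)) - trForm (df L * L) (Ra (dh L * L))
    + trForm (L * df L) (Rs (dh L * L)) - trForm (df L * L) (Rs (L * dh L))

/-- The linear r-matrix bracket `{f,h}₁(L) = ⟨L, [R df(L), dh(L)] + [df(L), R dh(L)]⟩`. -/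
def linBr (df dh : gl n → gl n) (L : gl n) : ℝ :=
  trForm L (⁅Rop (df L), dh L⁆ + ⁅df L, Rop (dh L)⁆)

/-- The Toda Hamiltonians `h_k(L) = (1/k)·tr(L^k)`. -/
def hamH (k : ℕ) (L : gl n) : ℝ := (1 / (k : ℝ)) * (L ^ k).trace

/-- `a` is an orthogonal matrix. -/
def IsOrth (a : gl n) : Prop := aᵀ * a = 1

/-- `b` belongs to `B`: upper triangular with strictly positive diagonal entries. -/
def InB (b : gl n) : Prop := b.BlockTriangular id ∧ ∀ i, 0 < b i i

/-- `F : 𝔐 → ℝ` is invariant under the action `(g,L) ↦ (a g b⁻¹, a L a⁻¹)`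
of `S = O(n,ℝ) × B` on `𝔐 = GL(n,ℝ) × gl(n,ℝ)`. -/
def SInvariant (F : gl n × gl n → ℝ) : Prop :=
  ∀ a b g L : gl n, IsOrth a → InB b → IsUnit g.det →
    F (a * g * b⁻¹, a * L * a⁻¹) = F (g, L)

/-- `F` is smooth on `𝔐 = GL(n,ℝ) × gl(n,ℝ)`. -/
def SmoothOnM (F : gl n × gl n → ℝ) : Prop :=
  ContDiffOn ℝ (⊤ : ℕ∞) F {p : gl n × gl n | IsUnit p.1.det}

/-- `N` is the left derivative `∇₁F`:
`⟨∇₁F(g,L), X⟩ = d/dt|₀ F(e^{tX} g, L)` for all `X`. -/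
def IsGrad1 (F : gl n × gl n → ℝ) (N : gl n × gl n → gl n) : Prop :=
  ∀ g L : gl n, IsUnit g.det → ∀ X : gl n,
    HasDerivAt (fun t : ℝ => F (NormedSpace.exp (t • X) * g, L)) (trForm (N (g, L)) X) 0

/-- `N` is the right derivative `∇₁'F`:
`⟨∇₁'F(g,L), X⟩ = d/dt|₀ F(g e^{tX}, L)` for all `X`. -/
def IsGrad1' (F : gl n × gl n → ℝ) (N : gl n × gl n → gl n) : Prop :=
  ∀ g L : gl n, IsUnit g.det → ∀ X : gl n,
    HasDerivAt (fun t : ℝ => F (g * NormedSpace.exp (t • X), L)) (trForm (N (g, L)) X) 0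

/-- `D` is the gradient `d₂F` of `F` in the second argument. -/
def IsGrad2 (F : gl n × gl n → ℝ) (D : gl n × gl n → gl n) : Prop :=
  ∀ g L : gl n, IsUnit g.det → ∀ Y : gl n,
    HasDerivAt (fun t : ℝ => F (g, L + t • Y)) (trForm (D (g, L)) Y) 0

/-- The quadratic bracket `{F,H}₂(g,L)` on `𝔐`, expressed through the derivative data
`nf = ∇₁F(g,L)`, `nf' = ∇₁'F(g,L)`, `d2f = d₂F(g,L)` and likewise for `H`:
`⟨R_a∇₁F, ∇₁H⟩ − ⟨R_a∇₁'F, ∇₁'H⟩ + ⟨∇₂F − ∇₂'F, r₊∇₂'H − r₋∇₂H⟩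
 + ⟨∇₁F, r₊∇₂'H − r₋∇₂H⟩ − ⟨∇₁H, r₊∇₂'F − r₋∇₂F⟩`. -/
def pb2 (nf nf' d2f nh nh' d2h L : gl n) : ℝ :=
  trForm (Ra nf) nh - trForm (Ra nf') nh'
    + trForm (L * d2f - d2f * L) (rPlus (d2h * L) - rMinus (L * d2h))
    + trForm nf (rPlus (d2h * L) - rMinus (L * d2h))
    - trForm nh (rPlus (d2f * L) - rMinus (L * d2f))

/-- The canonical bracket `{F,H}₁(g,L)` on `𝔐`, expressed through the derivative data:
`⟨∇₁F, d₂H⟩ − ⟨∇₁H, d₂F⟩ + ⟨L, [d₂F, d₂H]⟩`. -/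
def pb1 (nf d2f nh d2h L : gl n) : ℝ :=
  trForm nf d2h - trForm nh d2f + trForm L ⁅d2f, d2h⁆


section stmt17aux

attribute [local instance] Matrix.frobeniusNormedRing Matrix.frobeniusNormedAlgebra

open NormedSpace

/-- trace pairing with a standard basis matrix picks out an entry. -/
lemma trForm_stdBasis (M : gl n) (i j : Fin n) :
    trForm M (Matrix.single j i 1) = M i j := by
  classical
  simp [trForm, Matrix.trace, Matrix.diag, Matrix.mul_apply, Matrix.single,
    Finset.sum_ite_eq, ite_and]

lemma trForm_sub (M X Y : gl n) : trForm M (X - Y) = trForm M X - trForm M Y := by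
  simp [trForm, mul_sub]

lemma gl_exp_deriv (X : gl n) :
    HasDerivAt (fun t : ℝ => NormedSpace.exp (t • X)) X 0 := by
  have := hasDerivAt_exp_smul_const (𝕂 := ℝ) X 0
  simp at this
  exact this

lemma gl_exp_sq_zero (A : gl n) (h : A * A = 0) : NormedSpace.exp A = 1 + A := by
  classical
  rw [NormedSpace.exp_eq_tsum ℝ]
  beta_reduce
  have hz : ∀ k : ℕ, k ∉ ({0, 1} : Finset ℕ) → (((k.factorial : ℝ))⁻¹ • A ^ k) = 0 := by
    intro k hk
    have h2 : 2 ≤ k := by simp [Finset.mem_insert] at hk; omega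
    obtain ⟨m, rfl⟩ := Nat.exists_eq_add_of_le h2
    rw [pow_add, pow_two, h, zero_mul, smul_zero]
  rw [tsum_eq_sum hz]
  norm_num [Finset.sum_insert, Nat.factorial]

lemma gl_exp_idem (A : gl n) (h : A * A = A) (s : ℝ) :
    NormedSpace.exp (s • A) = 1 + (Real.exp s - 1) • A := by
  classical
  have hpow : ∀ k : ℕ, k ≠ 0 → A ^ k = A := by
    intro k hk
    induction k with
    | zero => omega
    | succ m ih =>
      rcases Nat.eq_zero_or_pos m with hm | hm
      · subst hm; simp
      · rw [pow_succ, ih hm.ne', h]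
  have key : ∀ k : ℕ, ((k.factorial : ℝ))⁻¹ • (s • A) ^ k
      = (s ^ k / (k.factorial : ℝ)) • A + (if k = 0 then (1 : gl n) - A else 0) := by
    intro k
    rcases eq_or_ne k 0 with rfl | hk
    · simp
    · rw [smul_pow, hpow k hk]
      simp [hk, smul_smul, div_eq_mul_inv, mul_comm]
  have hsum1 : Summable fun k : ℕ => (s ^ k / (k.factorial : ℝ)) • A :=
    (Real.summable_pow_div_factorial s).smul_const A
  have hsum2 : Summable fun k : ℕ => (if k = 0 then (1 : gl n) - A else 0) := by
    apply summable_of_ne_finset_zero (s := ({0} : Finset ℕ))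
    intro b hb
    simp at hb
    simp [hb]
  have hexp : (∑' k : ℕ, s ^ k / (k.factorial : ℝ)) = Real.exp s := by
    rw [Real.exp_eq_exp_ℝ, NormedSpace.exp_eq_tsum_div]
  rw [NormedSpace.exp_eq_tsum ℝ]
  beta_reduce
  calc (∑' k : ℕ, ((k.factorial : ℝ))⁻¹ • (s • A) ^ k)
      = ∑' k : ℕ, ((s ^ k / (k.factorial : ℝ)) • A + (if k = 0 then (1 : gl n) - A else 0)) :=
        tsum_congr key
    _ = (∑' k : ℕ, s ^ k / (k.factorial : ℝ)) • A + ∑' k : ℕ, (if k = 0 then (1 : gl n) - A else 0) := by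
        rw [Summable.tsum_add hsum1 hsum2, Summable.tsum_smul_const (Real.summable_pow_div_factorial s)]
    _ = Real.exp s • A + ((1 : gl n) - A) := by
        rw [hexp, tsum_eq_single 0 (by intro b hb; simp [hb])]
        simp
    _ = 1 + (Real.exp s - 1) • A := by
        rw [sub_smul, one_smul]; abel

lemma gl_exp_neg_inv (A : gl n) : (NormedSpace.exp (-A))⁻¹ = NormedSpace.exp A := by
  rw [Matrix.exp_neg A,
    Matrix.nonsing_inv_nonsing_inv _ ((Matrix.isUnit_iff_isUnit_det _).mp
      (Matrix.isUnit_exp A))]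

lemma gl_exp_orth (X : gl n) (hX : Xᵀ = -X) (t : ℝ) : IsOrth (NormedSpace.exp (t • X)) := by
  unfold IsOrth
  have ht : (NormedSpace.exp (t • X))ᵀ = NormedSpace.exp (-(t • X)) := by
    rw [← Matrix.exp_transpose, Matrix.transpose_smul, hX, smul_neg]
  rw [ht, ← Matrix.exp_add_of_commute _ _ (Commute.neg_left (Commute.refl (t • X)))]
  simp

/-- the main analytic computation packaged as a lemma. -/
lemma stmt17core (F : gl n × gl n → ℝ)
    (hF : SmoothOnM F) (hFinv : SInvariant F)
    (N1 : gl n × gl n → gl n) (h1 : IsGrad1 F N1)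
    (df : gl n → gl n) (hdf : IsGradient (fun L : gl n => F (1, L)) df)
    (L : gl n) :
    (∀ i j : Fin n, j ≤ i → N1 (1, L) i j = 0) ∧
    (∀ X : gl n, Xᵀ = -X →
      trForm (N1 (1, L)) X = trForm (df L * L - L * df L) X) := by
  classical
  have hdet1 : IsUnit (1 : gl n).det := by simp
  -- Part 1
  have hzero : ∀ i j : Fin n, j ≤ i → N1 (1, L) i j = 0 := by
    intro i j hji
    set E : gl n := Matrix.single j i 1 with hE
    have hEBT : ∀ a b : Fin n, b < a → E a b = 0 := by
      intro a b hba
      simp only [hE, Matrix.single, Matrix.of_apply, ite_eq_right_iff]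
      rintro ⟨rfl, rfl⟩
      exact absurd hji (not_le.mpr hba)
    have hform : ∀ s : ℝ, ∃ c : ℝ, (∀ k, 0 < 1 + c * E k k) ∧
        NormedSpace.exp (s • E) = 1 + c • E := by
      intro s
      rcases lt_or_eq_of_le hji with hlt | heq
      · refine ⟨s, ?_, ?_⟩
        · intro k
          have : E k k = 0 := by
            simp only [hE, Matrix.single, Matrix.of_apply, ite_eq_right_iff]
            rintro ⟨rfl, rfl⟩; exact absurd hlt (lt_irrefl _)
          simp [this]
        · have hsq : (s • E) * (s • E) = 0 := by
            have hEE : E * E = 0 := by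
              rw [hE]
              exact Matrix.single_mul_single_of_ne (c := (1 : ℝ)) j i j hlt.ne' 1
            rw [Matrix.smul_mul, Matrix.mul_smul, hEE, smul_zero, smul_zero]
          rw [gl_exp_sq_zero _ hsq]
      · subst heq
        refine ⟨Real.exp s - 1, ?_, gl_exp_idem E ?_ s⟩
        · intro k
          rcases eq_or_ne k j with rfl | hk
          · have hd : E k k = 1 := by simp [hE, Matrix.single]
            rw [hd]
            simpa using Real.exp_pos s
          · have hd : E k k = 0 := by
              simp [hE, Matrix.single, Ne.symm hk]
            simp [hd]
        · rw [hE]; simp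
    have hconst : ∀ t : ℝ, F (NormedSpace.exp (t • E) * 1, L) = F (1, L) := by
      intro t
      obtain ⟨c, hc, hexp⟩ := hform (-t)
      have hInB : InB (NormedSpace.exp ((-t) • E)) := by
        rw [hexp]
        constructor
        · intro a b hba
          have h1a : (1 : gl n) a b = 0 := Matrix.one_apply_ne (ne_of_gt hba)
          simp [Matrix.add_apply, h1a, hEBT a b hba]
        · intro k
          simpa [Matrix.add_apply] using hc k
      have hbinv : (NormedSpace.exp ((-t) • E))⁻¹ = NormedSpace.exp (t • E) := by
        rw [show ((-t) • E : gl n) = -(t • E) by rw [neg_smul]]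
        exact gl_exp_neg_inv (t • E)
      have := hFinv 1 (NormedSpace.exp ((-t) • E)) 1 L (by simp [IsOrth]) hInB hdet1
      rw [hbinv] at this
      simpa using this
    have h0 : HasDerivAt (fun t : ℝ => F (NormedSpace.exp (t • E) * 1, L))
        (trForm (N1 (1, L)) E) 0 := h1 1 L hdet1 E
    have h0' : HasDerivAt (fun t : ℝ => F (NormedSpace.exp (t • E) * 1, L)) 0 0 := by
      have : (fun t : ℝ => F (NormedSpace.exp (t • E) * 1, L)) = fun _ => F (1, L) := by
        funext t; exact hconst t
      rw [this]; exact hasDerivAt_const 0 _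
    have := h0.unique h0'
    rwa [hE, trForm_stdBasis] at this
  refine ⟨hzero, ?_⟩
  -- analytic setup
  have hopen : IsOpen {p : gl n × gl n | IsUnit p.1.det} := by
    have hcont : Continuous fun p : gl n × gl n => p.1.det := continuous_fst.matrix_det
    have : {p : gl n × gl n | IsUnit p.1.det}
        = (fun p : gl n × gl n => p.1.det) ⁻¹' {x : ℝ | x ≠ 0} := by
      ext p; simp [isUnit_iff_ne_zero]
    rw [this]
    exact isOpen_ne.preimage hcont
  have hdF : DifferentiableAt ℝ F (1, L) :=
    (hF.contDiffAt (hopen.mem_nhds hdet1)).differentiableAt (by simp)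
  set φ := fderiv ℝ F (1, L) with hφdef
  have hFd : HasFDerivAt F φ (1, L) := hdF.hasFDerivAt
  have hφ1 : ∀ X : gl n, φ (X, 0) = trForm (N1 (1, L)) X := by
    intro X
    have hc : HasDerivAt (fun t : ℝ => (NormedSpace.exp (t • X) * 1, L)) (X * 1, 0) 0 :=
      ((gl_exp_deriv X).mul_const 1).prodMk (hasDerivAt_const 0 L)
    have hcomp : HasDerivAt (fun t : ℝ => F (NormedSpace.exp (t • X) * 1, L))
        (φ (X * 1, 0)) 0 := by
      have h00 : HasFDerivAt F φ ((fun t : ℝ => (NormedSpace.exp (t • X) * 1, L)) 0) := by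
        simpa using hFd
      exact h00.comp_hasDerivAt 0 hc
    have := (h1 1 L hdet1 X).unique hcomp
    rw [this, mul_one]
  have hφ2 : ∀ Y : gl n, φ (0, Y) = trForm (df L) Y := by
    intro Y
    have hc : HasDerivAt (fun t : ℝ => ((1 : gl n), L + t • Y)) (0, Y) 0 := by
      refine (hasDerivAt_const 0 1).prodMk ?_
      simpa using ((hasDerivAt_id (0 : ℝ)).smul_const Y).const_add L
    have hcomp : HasDerivAt (fun t : ℝ => F (1, L + t • Y)) (φ (0, Y)) 0 := by
      have h00 : HasFDerivAt F φ ((fun t : ℝ => ((1 : gl n), L + t • Y)) 0) := by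
        simpa using hFd
      exact h00.comp_hasDerivAt 0 hc
    exact ((hdf L Y).unique hcomp).symm
  -- skew directions
  intro X hX
  have hce : HasDerivAt (fun t : ℝ => NormedSpace.exp (t • X)) X 0 := gl_exp_deriv X
  have hcen : HasDerivAt (fun t : ℝ => NormedSpace.exp (t • (-X))) (-X) 0 := gl_exp_deriv (-X)
  have hc2 : HasDerivAt
      (fun t : ℝ => NormedSpace.exp (t • X) * L * NormedSpace.exp (t • (-X)))
      (X * L - L * X) 0 := by
    have := (hce.mul_const L).mul hcen
    simp [mul_neg, sub_eq_add_neg] at this ⊢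
    exact this
  have hc : HasDerivAt (fun t : ℝ =>
      (NormedSpace.exp (t • X), NormedSpace.exp (t • X) * L * NormedSpace.exp (t • (-X))))
      (X, X * L - L * X) 0 := hce.prodMk hc2
  have hconst : ∀ t : ℝ, F (NormedSpace.exp (t • X),
      NormedSpace.exp (t • X) * L * NormedSpace.exp (t • (-X))) = F (1, L) := by
    intro t
    have hainv : (NormedSpace.exp (t • X))⁻¹ = NormedSpace.exp (t • (-X)) := by
      rw [show (t • (-X) : gl n) = -(t • X) by rw [smul_neg]]
      exact (Matrix.exp_neg (t • X)).symm
    have hInB1 : InB (1 : gl n) := by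
      constructor
      · intro a b hba; exact Matrix.one_apply_ne (ne_of_gt hba)
      · intro k; simp
    have := hFinv (NormedSpace.exp (t • X)) 1 1 L (gl_exp_orth X hX t) hInB1 hdet1
    rw [inv_one] at this
    rw [← hainv]
    simpa using this
  have hcomp : HasDerivAt (fun t : ℝ => F (NormedSpace.exp (t • X),
      NormedSpace.exp (t • X) * L * NormedSpace.exp (t • (-X))))
      (φ (X, X * L - L * X)) 0 := by
    have h00 : HasFDerivAt F φ ((fun t : ℝ =>
        (NormedSpace.exp (t • X),
          NormedSpace.exp (t • X) * L * NormedSpace.exp (t • (-X)))) 0) := by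
      simpa using hFd
    exact h00.comp_hasDerivAt 0 hc
  have h0' : HasDerivAt (fun t : ℝ => F (NormedSpace.exp (t • X),
      NormedSpace.exp (t • X) * L * NormedSpace.exp (t • (-X)))) 0 0 := by
    have : (fun t : ℝ => F (NormedSpace.exp (t • X),
        NormedSpace.exp (t • X) * L * NormedSpace.exp (t • (-X)))) = fun _ => F (1, L) := by
      funext t; exact hconst t
    rw [this]; exact hasDerivAt_const 0 _
  have hkey : φ (X, X * L - L * X) = 0 := hcomp.unique h0'
  have hsplit : φ (X, X * L - L * X) = φ (X, 0) + φ (0, X * L - L * X) := by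
    rw [← map_add]
    congr 1
    simp
  rw [hsplit, hφ1, hφ2] at hkey
  have htr : trForm (df L) (X * L - L * X) = - trForm (df L * L - L * df L) X := by
    simp only [trForm, mul_sub, sub_mul, Matrix.trace_sub, ← mul_assoc]
    rw [Matrix.trace_mul_cycle (df L) X L]
    ring
  rw [htr] at hkey
  linarith

end stmt17aux

/-- for `S`-invariant `F` and `f(L) = F(1ₙ, L)`, the matrix `∇₁F(1ₙ,L)`
is strictly upper triangular and equals `M_> − (M_<)ᵀ`, where `M = ∇'f(L) − ∇f(L)`. -/
theorem stmt17 (n : ℕ) (F : gl n × gl n → ℝ)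
    (hF : SmoothOnM F) (hFinv : SInvariant F)
    (N1 : gl n × gl n → gl n) (h1 : IsGrad1 F N1)
    (df : gl n → gl n) (hdf : IsGradient (fun L : gl n => F (1, L)) df)
    (L : gl n) :
    (∀ i j : Fin n, j ≤ i → N1 (1, L) i j = 0) ∧
    N1 (1, L) = upPart (df L * L - L * df L) - (lowPart (df L * L - L * df L))ᵀ := by
  classical
  obtain ⟨hzero, hskew⟩ := stmt17core F hF hFinv N1 h1 df hdf L
  refine ⟨hzero, ?_⟩
  set M : gl n := df L * L - L * df L with hM
  ext i j
  rcases le_or_gt j i with hji | hij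
  · rw [hzero i j hji]
    have h1 : upPart M i j = 0 := by simp [upPart, not_lt.mpr hji]
    have h2 : lowPart M j i = 0 := by simp [lowPart, not_lt.mpr hji]
    rw [Matrix.sub_apply, Matrix.transpose_apply, h1, h2, sub_zero]
  · set X : gl n := Matrix.single j i 1 - Matrix.single i j 1 with hX
    have hXskew : Xᵀ = -X := by
      ext a b
      simp only [hX, Matrix.transpose_apply, Matrix.sub_apply, Matrix.neg_apply,
        Matrix.single, Matrix.of_apply]
      have e1 : (j = b ∧ i = a) = (i = a ∧ j = b) := by rw [and_comm]
      have e2 : (i = b ∧ j = a) = (j = a ∧ i = b) := by rw [and_comm]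
      simp only [e1, e2]
      ring
    have := hskew X hXskew
    rw [hX, trForm_sub, trForm_sub, trForm_stdBasis, trForm_stdBasis,
      trForm_stdBasis, trForm_stdBasis, hzero j i (le_of_lt hij)] at this
    have hup : upPart M i j = M i j := by simp [upPart, hij]
    have hlo : (lowPart M)ᵀ i j = M j i := by simp [lowPart, Matrix.transpose_apply, hij]
    rw [Matrix.sub_apply, hup, hlo]
    linarith
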